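/- arXiv:0801.0170 — 2 statements merged into one kernel-verified Lean document; each statement's English description precedes it below -/
import Mathlib

section
/- Let X be a topological space and κ an infinite cardinal. Then X has no free sequence of length κ⁺ if and only if: for every Y ⊆ X and every family 𝒰 of open sets such that for every A ⊆ Y with |A| ≤ κ there is U ∈ 𝒰 with cl(A) ⊆ U, there exists a subfamily 𝒱 ⊆ 𝒰 with |𝒱| ≤ κ covering Y. -/
/-! If `Y` and `𝒰` admit no subcover of size `≤ κ`, choose by transfinite recursion points
`x_α ∈ Y` and sets `U_α ∈ 𝒰` with `cl {x_β | β < α} ⊆ U_α` and `x_α ∉ U_β` for `β ≤ α`. This never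
gets stuck before `κ⁺`, because both families built so far have size `≤ κ`, and the sequence `x` is
free: the open set `U_δ` contains the closure of the head and misses every point of the tail.

Conversely, the complements of the closures of the tails of a free sequence of length `κ⁺` form
a family as in the hypothesis, since by regularity of `κ⁺` every `≤ κ` points of the sequence lie
in a proper initial segment. By regularity again, `≤ κ` of these sets miss a common point. -/

open Cardinal Set

/-- `p` enumerates a free sequence of length `μ`: for every `δ < μ` the
closure of the initial segment is disjoint from the closure of the rest. -/
def IsFreeSeq {X : Type u} [TopologicalSpace X] (μ : Ordinal.{u}) (p : Ordinal.{u} → X) : Prop :=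
  ∀ δ < μ, closure (p '' Set.Iio δ) ∩ closure (p '' Set.Ico δ μ) = ∅

universe u

section OrdSucc

variable {κ : Cardinal.{u}}

theorem mk_image_Iio_le_of_lt_ord_succ {α : Type u} (f : Ordinal.{u} → α) {δ : Ordinal.{u}}
    (hδ : δ < (Order.succ κ).ord) : #(f '' Iio δ) ≤ κ := by
  have h := mk_image_le_lift (f := f) (s := Iio δ)
  rw [mk_Iio_ordinal, lift_lift, lift_le] at h
  exact h.trans (Order.lt_succ_iff.mp (lt_ord.mp hδ))

theorem exists_lt_ord_succ_forall_lt (hκ : ℵ₀ ≤ κ) {ι : Type u} (hι : #ι ≤ κ)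
    {f : ι → Ordinal.{u}} (hf : ∀ i, f i < (Order.succ κ).ord) :
    ∃ δ < (Order.succ κ).ord, ∀ i, f i < δ := by
  refine ⟨⨆ i, f i + 1, Ordinal.iSup_add_one_lt_of_lt_cof ?_ hf, fun i => ?_⟩
  · rw [(isRegular_succ hκ).cof_ord]
    exact hι.trans_lt (Order.lt_succ κ)
  · exact (lt_add_one (f i)).trans_le (Ordinal.le_iSup (fun j => f j + 1) i)

theorem exists_lt_ord_succ_subset_image_Iio (hκ : ℵ₀ ≤ κ) {α : Type u} {g : Ordinal.{u} → α}
    {A : Set α} (hA : A ⊆ g '' Iio (Order.succ κ).ord) (hAκ : #A ≤ κ) :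
    ∃ δ < (Order.succ κ).ord, A ⊆ g '' Iio δ := by
  choose f hfμ hfg using fun a : A => hA a.2
  obtain ⟨δ, hδ, hfδ⟩ := exists_lt_ord_succ_forall_lt hκ hAκ hfμ
  exact ⟨δ, hδ, fun a ha => ⟨f ⟨a, ha⟩, hfδ _, hfg _⟩⟩

end OrdSucc

section Greedy

variable {X : Type u} (pick : Set X → Set X) (avoid : Set (Set X) → X)

noncomputable def greedySeq : Ordinal.{u} → X × Set X :=
  Ordinal.lt_wf.fix fun α g =>
    let U := pick (range fun β : Iio α => (g β β.2).1)
    (avoid (insert U (range fun β : Iio α => (g β β.2).2)), U)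

theorem greedySeq_eq (α : Ordinal.{u}) :
    greedySeq pick avoid α =
      (avoid (insert (pick ((Prod.fst ∘ greedySeq pick avoid) '' Iio α))
        ((Prod.snd ∘ greedySeq pick avoid) '' Iio α)),
      pick ((Prod.fst ∘ greedySeq pick avoid) '' Iio α)) := by
  refine (Ordinal.lt_wf.fix_eq _ α).trans ?_
  simp only [image_eq_range]
  rfl

theorem greedySeq_snd (α : Ordinal.{u}) :
    (greedySeq pick avoid α).2 = pick ((Prod.fst ∘ greedySeq pick avoid) '' Iio α) := by
  rw [greedySeq_eq]

theorem greedySeq_fst (α : Ordinal.{u}) :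
    (greedySeq pick avoid α).1 = avoid ((Prod.snd ∘ greedySeq pick avoid) '' Iic α) := by
  rw [greedySeq_eq, ← Iio_insert, image_insert_eq, Function.comp_apply, greedySeq_snd]

variable {pick avoid}

theorem greedySeq_fst_mem_and_forall_notMem {κ : Cardinal.{u}} (hκ : ℵ₀ ≤ κ) {Y : Set X}
    {𝒰 : Set (Set X)} (hpick : ∀ A ⊆ Y, #A ≤ κ → pick A ∈ 𝒰)
    (havoid : ∀ 𝒲 ⊆ 𝒰, #𝒲 ≤ κ → avoid 𝒲 ∈ Y ∧ avoid 𝒲 ∉ ⋃₀ 𝒲) {α : Ordinal.{u}}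
    (hα : α < (Order.succ κ).ord) :
    (greedySeq pick avoid α).1 ∈ Y ∧
      ∀ β ≤ α, (greedySeq pick avoid α).1 ∉ (greedySeq pick avoid β).2 := by
  induction α using WellFoundedLT.induction with
  | ind α IH =>
    have hU : ∀ β ≤ α, (greedySeq pick avoid β).2 ∈ 𝒰 := fun β hβ => by
      rw [greedySeq_snd]
      refine hpick _ ?_ (mk_image_Iio_le_of_lt_ord_succ _ (hβ.trans_lt hα))
      rintro _ ⟨γ, hγ, rfl⟩
      exact (IH γ (hγ.trans_le hβ) ((hγ.trans_le hβ).trans hα)).1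
    have hsucc : Order.succ α < (Order.succ κ).ord :=
      (isSuccLimit_ord (hκ.trans (Order.le_succ κ))).succ_lt hα
    have hnew := havoid ((Prod.snd ∘ greedySeq pick avoid) '' Iic α)
      (by rintro _ ⟨β, hβ, rfl⟩; exact hU β hβ)
      (by rw [← Order.Iio_succ]; exact mk_image_Iio_le_of_lt_ord_succ _ hsucc)
    rw [greedySeq_fst]
    exact ⟨hnew.1, fun β hβ h => hnew.2 ⟨_, ⟨β, hβ, rfl⟩, h⟩⟩

end Greedy

theorem exists_isFreeSeq_of_not_exists_cover {X : Type u} [TopologicalSpace X]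
    {κ : Cardinal.{u}} (hκ : ℵ₀ ≤ κ) {Y : Set X} {𝒰 : Set (Set X)} (hopen : ∀ U ∈ 𝒰, IsOpen U)
    (hcl : ∀ A ⊆ Y, #A ≤ κ → ∃ U ∈ 𝒰, closure A ⊆ U)
    (hcover : ¬ ∃ 𝒱 ⊆ 𝒰, #𝒱 ≤ κ ∧ Y ⊆ ⋃₀ 𝒱) :
    ∃ p : Ordinal.{u} → X, IsFreeSeq (Order.succ κ).ord p := by
  have hescape : ∀ 𝒱 ⊆ 𝒰, #𝒱 ≤ κ → ∃ y ∈ Y, y ∉ ⋃₀ 𝒱 := fun 𝒱 h𝒱 h𝒱κ =>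
    not_subset.mp fun hY => hcover ⟨𝒱, h𝒱, h𝒱κ, hY⟩
  have : Nonempty X := by
    obtain ⟨y, -⟩ := hescape ∅ (empty_subset _) (by simp)
    exact ⟨y⟩
  choose! pick hpick𝒰 hpickcl using hcl
  choose! avoid havoid using hescape
  have hseq := fun α => greedySeq_fst_mem_and_forall_notMem (α := α) hκ hpick𝒰 havoid
  refine ⟨Prod.fst ∘ greedySeq pick avoid, fun δ hδ => ?_⟩
  have hY : (Prod.fst ∘ greedySeq pick avoid) '' Iio δ ⊆ Y := by
    rintro _ ⟨β, hβ, rfl⟩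
    exact (hseq β (hβ.trans hδ)).1
  have hδκ := mk_image_Iio_le_of_lt_ord_succ (Prod.fst ∘ greedySeq pick avoid) hδ
  have hhead :
      closure ((Prod.fst ∘ greedySeq pick avoid) '' Iio δ) ⊆ (greedySeq pick avoid δ).2 := by
    rw [greedySeq_snd]
    exact hpickcl _ hY hδκ
  have hopenδ : IsOpen (greedySeq pick avoid δ).2 := by
    rw [greedySeq_snd]
    exact hopen _ (hpick𝒰 _ hY hδκ)
  have htail : closure ((Prod.fst ∘ greedySeq pick avoid) '' Ico δ (Order.succ κ).ord) ⊆
      (greedySeq pick avoid δ).2ᶜ := by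
    refine closure_minimal ?_ hopenδ.isClosed_compl
    rintro _ ⟨α, ⟨hδα, hα⟩, rfl⟩
    exact (hseq α hα).2 δ hδα
  exact disjoint_iff_inter_eq_empty.mp (disjoint_compl_right.mono hhead htail)

theorem not_isFreeSeq_of_forall_cover {X : Type u} [TopologicalSpace X] {κ : Cardinal.{u}}
    (hκ : ℵ₀ ≤ κ)
    (hcover : ∀ (Y : Set X) (𝒰 : Set (Set X)), (∀ U ∈ 𝒰, IsOpen U) →
      (∀ A ⊆ Y, #A ≤ κ → ∃ U ∈ 𝒰, closure A ⊆ U) → ∃ 𝒱 ⊆ 𝒰, #𝒱 ≤ κ ∧ Y ⊆ ⋃₀ 𝒱)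
    (p : Ordinal.{u} → X) : ¬ IsFreeSeq (Order.succ κ).ord p := by
  intro hp
  set μ := (Order.succ κ).ord
  let awayFromTail : Ordinal.{u} → Set X := fun δ => (closure (p '' Ico δ μ))ᶜ
  obtain ⟨𝒱, h𝒱, h𝒱κ, hY𝒱⟩ := hcover (p '' Iio μ) (awayFromTail '' Iio μ)
    (by rintro _ ⟨δ, -, rfl⟩; exact isClosed_closure.isOpen_compl)
    (fun A hAY hAκ => by
      obtain ⟨δ, hδ, hAδ⟩ := exists_lt_ord_succ_subset_image_Iio hκ hAY hAκ
      refine ⟨awayFromTail δ, mem_image_of_mem _ hδ, (closure_mono hAδ).trans ?_⟩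
      exact subset_compl_iff_disjoint_right.mpr (disjoint_iff_inter_eq_empty.mpr (hp δ hδ)))
  obtain ⟨δ, hδ, h𝒱δ⟩ := exists_lt_ord_succ_subset_image_Iio hκ h𝒱 h𝒱κ
  obtain ⟨V, hV, hpV⟩ := hY𝒱 (mem_image_of_mem p hδ)
  obtain ⟨γ, hγδ, rfl⟩ := h𝒱δ hV
  exact hpV (subset_closure ⟨δ, ⟨hγδ.le, hδ⟩, rfl⟩)

/-- Characterization of spaces with no free sequences of length `κ⁺`:
`X` has no free sequence of length `κ⁺` iff for every `Y ⊆ X` and every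
family `𝒰` of open sets such that the closure of every subset of `Y` of
size `≤ κ` is contained in some member of `𝒰`, some subfamily of `𝒰` of
size `≤ κ` covers `Y`. -/
theorem no_free_seq_iff_reflection (X : Type u) [TopologicalSpace X]
    (κ : Cardinal.{u}) (hκ : ℵ₀ ≤ κ) :
    (¬ ∃ p : Ordinal.{u} → X, IsFreeSeq ((Order.succ κ).ord) p) ↔
    (∀ (Y : Set X) (𝒰 : Set (Set X)), (∀ U ∈ 𝒰, IsOpen U) →
      (∀ A : Set X, A ⊆ Y → #A ≤ κ → ∃ U ∈ 𝒰, closure A ⊆ U) →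
      ∃ 𝒱 ⊆ 𝒰, #𝒱 ≤ κ ∧ Y ⊆ ⋃₀ 𝒱) := by
  refine ⟨fun hfree Y 𝒰 hopen hcl => ?_, fun hcover ⟨p, hp⟩ => ?_⟩
  · by_contra hcover
    exact hfree (exists_isFreeSeq_of_not_exists_cover hκ hopen hcl hcover)
  · exact not_isFreeSeq_of_forall_cover hκ hcover p hp
end

section
/- An ordinal δ satisfies: δ = κ·ε for some ordinal ε if and only if the σ_κ-normal form of δ has Δ = 0, where κ is an infinite cardinal. -/
open Cardinal Set

/-!
Every value of `σ` is a multiple of `κ`: at a successor one adds `|σ α|`, an initial ordinal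
which `κ` divides because it is multiplicatively principal, and a supremum of multiples of `κ`
is again one. Since `σ` is normal, the largest `α` with `σ α ≤ δ` exists, and peeling off
`σ α` greedily produces a normal form `δ = σ α₀ + ⋯ + σ αₙ₋₁ + Δ`. Left cancellation of
divisibility then gives `κ ∣ δ ↔ κ ∣ Δ`, and `Δ < κ` forces `Δ = 0`.
-/

/-- `NormalForm κ σ δ l Δ`: `δ = σ α₀ + ⋯ + σ αₙ₋₁ + Δ` where `l = [α₀, …, αₙ₋₁]`,
with strictly decreasing cardinalities `|σ αᵢ|`, positive last entry, `Δ < κ`. -/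
def NormalForm (κ : Cardinal.{0}) (σ : Ordinal.{0} → Ordinal.{0})
    (δ : Ordinal) (l : List Ordinal) (Δ : Ordinal) : Prop :=
  δ = (l.map σ).foldr (· + ·) Δ ∧
  l.Chain' (fun a b => (σ b).card < (σ a).card) ∧
  (∀ a, l.getLast? = some a → 0 < a) ∧
  Δ < κ.ord

namespace Ordinal

theorem dvd_sSup {c : Ordinal} {S : Set Ordinal} (hS : BddAbove S) (h : ∀ s ∈ S, c ∣ s) :
    c ∣ sSup S := by
  rcases S.eq_empty_or_nonempty with rfl | hne
  · simp
  rcases eq_zero_or_pos c with rfl | hc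
  · rw [hne.subset_singleton_iff.1 fun s hs => zero_dvd_iff.1 (h s hs), csSup_singleton]
  obtain ⟨s, hs⟩ := hne
  have hSc : S = (c * ·) '' ((c * ·) ⁻¹' S) :=
    (image_preimage_eq_of_subset fun s hs => (h s hs).imp fun e he => he.symm).symm
  rw [hSc, ← (isNormal_mul_right hc).map_sSup]
  · exact dvd_mul_right _ _
  · obtain ⟨e, rfl⟩ := h s hs
    exact ⟨e, hs⟩
  · exact ⟨sSup S, fun e he => (le_mul_right e hc).trans (le_csSup hS he)⟩

theorem eq_zero_of_dvd_of_lt {a b : Ordinal} (h : a ∣ b) (hb : b < a) : b = 0 := by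
  by_contra hb0
  exact (le_of_dvd hb0 h).not_gt hb

theorem dvd_foldr_add_iff {c Δ : Ordinal} {L : List Ordinal} (h : ∀ x ∈ L, c ∣ x) :
    c ∣ L.foldr (· + ·) Δ ↔ c ∣ Δ := by
  induction L with
  | nil => rfl
  | cons x L ih =>
    rw [List.foldr_cons, dvd_add_iff (h x List.mem_cons_self)]
    exact ih fun y hy => h y (List.mem_cons_of_mem x hy)

end Ordinal

theorem Cardinal.ord_dvd_ord {κ μ : Cardinal} (hκ : ℵ₀ ≤ κ) (h : κ ≤ μ) : κ.ord ∣ μ.ord := by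
  rcases h.eq_or_lt with rfl | hlt
  · rfl
  have hκ0 : 0 < κ.ord := ord_pos.2 (aleph0_pos.trans_le hκ)
  have hμ := Ordinal.isPrincipal_mul_ord (hκ.trans h)
  exact ⟨μ.ord, (Ordinal.isPrincipal_mul_iff_mul_left_eq.1 hμ κ.ord hκ0 (ord_lt_ord.2 hlt)).symm⟩

namespace NormalForm

variable {κ : Cardinal.{0}} {σ : Ordinal.{0} → Ordinal.{0}} {δ Δ : Ordinal} {l : List Ordinal}

theorem nil (hΔ : Δ < κ.ord) : NormalForm κ σ Δ [] Δ :=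
  ⟨rfl, List.IsChain.nil, by simp, hΔ⟩

theorem cons (h : NormalForm κ σ δ l Δ) {α : Ordinal} (hα : 0 < α)
    (hδ : δ < (σ α).card.ord) : NormalForm κ σ (σ α + δ) (α :: l) Δ := by
  obtain ⟨rfl, hchain, hlast, hΔ⟩ := h
  refine ⟨rfl, ?_, ?_, hΔ⟩
  · cases l with
    | nil => exact List.isChain_singleton α
    | cons b t =>
      refine hchain.cons_cons ?_
      calc (σ b).card ≤ (((b :: t).map σ).foldr (· + ·) Δ).card :=
            Ordinal.card_le_card le_self_add
        _ < (σ α).card := lt_ord.1 hδ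
  · cases l with
    | nil => simpa using hα
    | cons b t => simpa only [List.getLast?_cons_cons] using hlast

end NormalForm

/-- The recursion defining the paper's `σ_κ`. -/
structure IsSigma (κ : Cardinal.{0}) (σ : Ordinal.{0} → Ordinal.{0}) : Prop where
  zero : σ 0 = 0
  one : σ 1 = κ.ord
  add_one : ∀ α : Ordinal, 0 < α → σ (α + 1) = σ α + (σ α).card.ord
  limit : ∀ β : Ordinal, Order.IsSuccLimit β → σ β = sSup (σ '' Iio β)

namespace IsSigma

variable {κ : Cardinal.{0}} {σ : Ordinal.{0} → Ordinal.{0}}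

theorem pos (hσ : IsSigma κ σ) (hκ : κ ≠ 0) {α : Ordinal} (hα : 0 < α) : 0 < σ α := by
  induction α using Ordinal.limitRecOn with
  | zero => exact absurd hα (lt_irrefl 0)
  | add_one γ ih =>
    rcases eq_zero_or_pos γ with rfl | hγ
    · rw [zero_add, hσ.one]
      exact Cardinal.ord_pos.2 (pos_iff_ne_zero.2 hκ)
    · rw [hσ.add_one γ hγ]
      exact (ih hγ).trans_le le_self_add
  | limit β hβ ih =>
    have h1 : (1 : Ordinal) < β := Ordinal.one_lt_of_isSuccLimit hβ
    rw [hσ.limit β hβ]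
    exact (ih 1 h1 zero_lt_one).trans_le (le_csSup Ordinal.bddAbove_of_small ⟨1, h1, rfl⟩)

theorem isNormal (hσ : IsSigma κ σ) (hκ : κ ≠ 0) : Order.IsNormal σ := by
  refine Order.IsNormal.of_succ_lt (fun α => ?_) fun {β} hβ => ?_
  · rw [Order.succ_eq_add_one]
    rcases eq_zero_or_pos α with rfl | hα
    · rw [hσ.zero]
      exact hσ.pos hκ (by simp)
    · rw [hσ.add_one α hα]
      exact lt_add_of_pos_right _ (by simpa [pos_iff_ne_zero] using hσ.pos hκ hα)
  · rw [hσ.limit β hβ]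
    exact isLUB_csSup ⟨σ 0, 0, hβ.bot_lt, rfl⟩ Ordinal.bddAbove_of_small

theorem ord_dvd (hσ : IsSigma κ σ) (hκ : ℵ₀ ≤ κ) (α : Ordinal) : κ.ord ∣ σ α := by
  induction α using Ordinal.limitRecOn with
  | zero => rw [hσ.zero]; exact dvd_zero _
  | add_one γ ih =>
    rcases eq_zero_or_pos γ with rfl | hγ
    · rw [zero_add, hσ.one]
    · have hκγ : κ.ord ≤ σ γ :=
        hσ.one ▸ (hσ.isNormal (aleph0_pos.trans_le hκ).ne').monotone (Order.one_le_iff_pos.2 hγ)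
      rw [hσ.add_one γ hγ]
      exact dvd_add ih (Cardinal.ord_dvd_ord hκ (ord_le.1 hκγ))
  | limit β hβ ih =>
    rw [hσ.limit β hβ]
    refine Ordinal.dvd_sSup Ordinal.bddAbove_of_small ?_
    rintro _ ⟨γ, hγ, rfl⟩
    exact ih γ hγ

theorem exists_normalForm (hσ : IsSigma κ σ) (hκ : κ ≠ 0) (δ : Ordinal) :
    ∃ l Δ, NormalForm κ σ δ l Δ := by
  induction δ using WellFoundedLT.induction with
  | _ δ ih =>
  obtain ⟨α, hαδ, hδα⟩ := (hσ.isNormal hκ).exists_map_le_lt_map_succ (x := δ)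
    (by simp [hσ.zero])
  rw [Order.succ_eq_add_one] at hδα
  rcases eq_zero_or_pos α with rfl | hα
  · rw [zero_add, hσ.one] at hδα
    exact ⟨[], δ, .nil hδα⟩
  obtain ⟨δ', rfl⟩ := exists_add_of_le hαδ
  rw [hσ.add_one α hα, add_lt_add_iff_left] at hδα
  obtain ⟨l, Δ, h⟩ := ih δ' (hδα.trans_le ((ord_card_le _).trans le_self_add))
  exact ⟨α :: l, Δ, h.cons hα hδα⟩

end IsSigma

/-- An ordinal `δ` is a multiple of `κ` iff its `σ_κ`-normal form has `Δ = 0`. -/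
theorem multiple_of_kappa_iff_normalForm_delta_zero (κ : Cardinal.{0}) (hκ : ℵ₀ ≤ κ)
    (σ : Ordinal.{0} → Ordinal.{0})
    (hσ0 : σ 0 = 0) (hσ1 : σ 1 = κ.ord)
    (hσs : ∀ α : Ordinal, 0 < α → σ (α + 1) = σ α + ((σ α).card).ord)
    (hσl : ∀ β : Ordinal, Order.IsSuccLimit β → σ β = sSup (σ '' Set.Iio β)) :
    ∀ δ : Ordinal, (∃ ε : Ordinal, δ = κ.ord * ε) ↔
      (∃ l : List Ordinal, NormalForm κ σ δ l 0) := by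
  have hσ : IsSigma κ σ := ⟨hσ0, hσ1, hσs, hσl⟩
  have hdvd (l : List Ordinal) : ∀ x ∈ l.map σ, κ.ord ∣ x := by
    simpa using fun a _ => hσ.ord_dvd hκ a
  intro δ
  change κ.ord ∣ δ ↔ _
  constructor
  · intro hδ
    obtain ⟨l, Δ, hδl, hchain, hlast, hΔ⟩ := hσ.exists_normalForm (aleph0_pos.trans_le hκ).ne' δ
    have hΔ0 : Δ = 0 :=
      Ordinal.eq_zero_of_dvd_of_lt ((Ordinal.dvd_foldr_add_iff (hdvd l)).1 (hδl ▸ hδ)) hΔ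
    exact ⟨l, hΔ0 ▸ ⟨hδl, hchain, hlast, hΔ⟩⟩
  · rintro ⟨l, hδl, -⟩
    exact hδl ▸ (Ordinal.dvd_foldr_add_iff (hdvd l)).2 (dvd_zero _)
end
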